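/- arXiv:math/0507222 — 3 statements merged into one kernel-verified Lean document; each statement's English description precedes it below -/
import Mathlib

section
/- Let A be an absolutely C̃-convex and C̃-absorbent subset of a C̃-module G. Then val_A(u) := sup{b ∈ ℝ : u ∈ [(ε^b)_ε] A} defines a valuation on G: val_A(0) = +∞, val_A(λu) ≥ val_{C̃}(λ) + val_A(u) for all λ ∈ C̃, and val_A(u+v) ≥ min(val_A(u), val_A(v)). -/
/-!
Write `S_A(u) = {b | u ∈ [(ε^b)_ε] A}`, so that `val_A(u) = sup S_A(u)`. Each valuation axiom follows
from a closure property of these sets of reals, after which one takes suprema in `EReal` (where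
`⊥ + ⊤ = ⊥`, so empty sets need no separate treatment). Absorbency puts `0` in `A`, so
`S_A(0) = ℝ`. Convexity makes `S_A(u)` downward closed, and then `A + A ⊆ A` gives
`min b c ∈ S_A(u + v)`. If `λ_ε = O(ε^b)`, then `|ε^{-b} λ|ₑ ≤ 1`, and balancedness turns
`u ∈ ε^c A` into `λ u ∈ ε^{b+c} A`.
-/

noncomputable section

open scoped Pointwise

set_option synthInstance.maxHeartbeats 1000000

/-- `|u ε| = O(ε^b)` as `ε → 0⁺` (nets indexed by `ε ∈ (0,1]`). -/
def IsO (u : ℝ → ℂ) (b : ℝ) : Prop :=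
  ∃ C > 0, ∃ ε₀ > 0, ∀ ε : ℝ, 0 < ε → ε ≤ ε₀ → ‖u ε‖ ≤ C * ε ^ b

def Moderate (u : ℝ → ℂ) : Prop := ∃ N : ℕ, IsO u (-(N : ℝ))

def Negligible (u : ℝ → ℂ) : Prop := ∀ q : ℕ, IsO u (q : ℝ)

lemma isO_mono {u : ℝ → ℂ} {b b' : ℝ} (h : IsO u b) (hb : b' ≤ b) : IsO u b' := by
  obtain ⟨C, hC, e, he, H⟩ := h
  refine ⟨C, hC, min e 1, lt_min he one_pos, fun ε hε hε' => ?_⟩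
  have h1 : ε ≤ e := le_trans hε' (min_le_left _ _)
  have h2 : ε ≤ 1 := le_trans hε' (min_le_right _ _)
  refine le_trans (H ε hε h1) (mul_le_mul_of_nonneg_left ?_ (le_of_lt hC))
  exact Real.rpow_le_rpow_of_exponent_ge hε h2 hb

/-- The subring `E_M ⊆ ℂ^{(0,1]}` of moderate nets. -/
def moderateSubring : Subring (ℝ → ℂ) where
  carrier := {u | Moderate u}
  zero_mem' := ⟨0, 1, one_pos, 1, one_pos, fun ε hε _ => by
    simp [Real.rpow_natCast]⟩
  one_mem' := ⟨0, 1, one_pos, 1, one_pos, fun ε hε _ => by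
    simp [Real.rpow_zero]⟩
  neg_mem' := by
    rintro u ⟨N, C, hC, e, he, H⟩
    exact ⟨N, C, hC, e, he, fun ε hε hε' => by simpa using H ε hε hε'⟩
  add_mem' := by
    rintro u v ⟨N, hN⟩ ⟨M, hM⟩
    have hl1 : (N : ℝ) ≤ ((max N M : ℕ) : ℝ) := by exact_mod_cast Nat.le_max_left N M
    have hl2 : (M : ℝ) ≤ ((max N M : ℕ) : ℝ) := by exact_mod_cast Nat.le_max_right N M
    obtain ⟨C1, hC1, e1, he1, H1⟩ := isO_mono hN (neg_le_neg hl1)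
    obtain ⟨C2, hC2, e2, he2, H2⟩ := isO_mono hM (neg_le_neg hl2)
    refine ⟨max N M, C1 + C2, by positivity, min e1 e2, lt_min he1 he2, fun ε hε hε' => ?_⟩
    calc ‖u ε + v ε‖ ≤ ‖u ε‖ + ‖v ε‖ :=
          norm_add_le _ _
      _ ≤ C1 * ε ^ (-((max N M : ℕ) : ℝ)) + C2 * ε ^ (-((max N M : ℕ) : ℝ)) :=
          add_le_add (H1 ε hε (le_trans hε' (min_le_left _ _)))
            (H2 ε hε (le_trans hε' (min_le_right _ _)))
      _ = (C1 + C2) * ε ^ (-((max N M : ℕ) : ℝ)) := by ring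
  mul_mem' := by
    rintro u v ⟨N, C1, hC1, e1, he1, H1⟩ ⟨M, C2, hC2, e2, he2, H2⟩
    refine ⟨N + M, C1 * C2, by positivity, min e1 e2, lt_min he1 he2, fun ε hε hε' => ?_⟩
    have h1 := H1 ε hε (le_trans hε' (min_le_left _ _))
    have h2 := H2 ε hε (le_trans hε' (min_le_right _ _))
    have hrw : ε ^ (-(((N + M : ℕ)) : ℝ)) = ε ^ (-(N : ℝ)) * ε ^ (-(M : ℝ)) := by
      rw [← Real.rpow_add hε]; push_cast; ring_nf
    calc ‖u ε * v ε‖ = ‖u ε‖ * ‖v ε‖ := norm_mul _ _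
      _ ≤ (C1 * ε ^ (-(N : ℝ))) * (C2 * ε ^ (-(M : ℝ))) :=
          mul_le_mul h1 h2 (norm_nonneg _) (by positivity)
      _ = C1 * C2 * ε ^ (-(((N + M : ℕ)) : ℝ)) := by rw [hrw]; ring

/-- The ideal `N ⊆ E_M` of negligible nets. -/
def negligibleIdeal : Ideal moderateSubring where
  carrier := {u | Negligible u.val}
  zero_mem' := fun q => ⟨1, one_pos, 1, one_pos, fun ε hε _ => by
    simpa using by positivity⟩
  add_mem' := by
    rintro u v hu hv q
    obtain ⟨C1, hC1, e1, he1, H1⟩ := hu q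
    obtain ⟨C2, hC2, e2, he2, H2⟩ := hv q
    refine ⟨C1 + C2, by positivity, min e1 e2, lt_min he1 he2, fun ε hε hε' => ?_⟩
    calc ‖u.val ε + v.val ε‖
        ≤ ‖u.val ε‖ + ‖v.val ε‖ := norm_add_le _ _
      _ ≤ C1 * ε ^ (q : ℝ) + C2 * ε ^ (q : ℝ) :=
          add_le_add (H1 ε hε (le_trans hε' (min_le_left _ _)))
            (H2 ε hε (le_trans hε' (min_le_right _ _)))
      _ = (C1 + C2) * ε ^ (q : ℝ) := by ring
  smul_mem' := by
    rintro c u hu q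
    obtain ⟨N, C1, hC1, e1, he1, H1⟩ := c.2
    obtain ⟨C2, hC2, e2, he2, H2⟩ := hu (q + N)
    refine ⟨C1 * C2, by positivity, min e1 e2, lt_min he1 he2, fun ε hε hε' => ?_⟩
    have h1 := H1 ε hε (le_trans hε' (min_le_left _ _))
    have h2 := H2 ε hε (le_trans hε' (min_le_right _ _))
    have hrw : ε ^ (-(N : ℝ)) * ε ^ (((q + N : ℕ)) : ℝ) = ε ^ (q : ℝ) := by
      rw [← Real.rpow_add hε]; push_cast; ring_nf
    calc ‖(c • u).val ε‖
        = ‖c.val ε‖ * ‖u.val ε‖ := norm_mul _ _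
      _ ≤ (C1 * ε ^ (-(N : ℝ))) * (C2 * ε ^ (((q + N : ℕ)) : ℝ)) :=
          mul_le_mul h1 h2 (norm_nonneg _) (by positivity)
      _ = C1 * C2 * (ε ^ (-(N : ℝ)) * ε ^ (((q + N : ℕ)) : ℝ)) := by ring
      _ = C1 * C2 * ε ^ (q : ℝ) := by rw [hrw]

/-- The ring `C̃ = E_M / N` of Colombeau generalized complex numbers. -/
abbrev Ctilde : Type := ↥moderateSubring ⧸ negligibleIdeal

/-- The valuation on `C̃`, computed on a representative. -/
def valC (x : Ctilde) : EReal :=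
  sSup ((fun b : ℝ => (b : EReal)) '' {b | IsO (Quotient.out x).val b})

/-- The ultra-pseudo-norm `|λ|ₑ = e^{-val(λ)}` on `C̃` (with `e^{-∞} := 0`). -/
def normEC (x : Ctilde) : ℝ :=
  if valC x = ⊤ then 0 else Real.exp (-(valC x).toReal)

lemma epsPow_moderate (b : ℝ) : Moderate (fun ε => ((ε ^ b : ℝ) : ℂ)) := by
  refine ⟨⌈-b⌉₊, 1, one_pos, 1, one_pos, fun ε hε hε' => ?_⟩
  have hb : -((⌈-b⌉₊ : ℝ)) ≤ b := by
    have := Nat.le_ceil (-b); linarith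
  have : ‖((ε ^ b : ℝ) : ℂ)‖ = ε ^ b := by
    rw [Complex.norm_real, Real.norm_eq_abs, abs_of_nonneg (Real.rpow_nonneg (le_of_lt hε) b)]
  rw [this, one_mul]
  exact Real.rpow_le_rpow_of_exponent_ge hε hε' hb

/-- The generalized number `[(ε^b)_ε] ∈ C̃`. -/
def epsPow (b : ℝ) : Ctilde :=
  Ideal.Quotient.mk negligibleIdeal ⟨fun ε => ((ε ^ b : ℝ) : ℂ), epsPow_moderate b⟩

section Module

variable {G : Type*} [AddCommGroup G] [Module Ctilde G]

/-- `A` is `C̃`-absorbent. -/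
def CAbsorbent (A : Set G) : Prop :=
  ∀ u : G, ∃ a : ℝ, ∀ b : ℝ, b ≤ a → u ∈ epsPow b • A

/-- `A` is `C̃`-balanced. -/
def CBalanced (A : Set G) : Prop :=
  ∀ lam : Ctilde, normEC lam ≤ 1 → lam • A ⊆ A

/-- `A` is `C̃`-convex. -/
def CConvex (A : Set G) : Prop :=
  A + A ⊆ A ∧ ∀ b : ℝ, 0 ≤ b → epsPow b • A ⊆ A

/-- The Minkowski valuation `val_A(u) = sup {b : u ∈ [(ε^b)_ε] A}`. -/
def valA (A : Set G) (u : G) : EReal :=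
  sSup ((fun b : ℝ => (b : EReal)) '' {b | u ∈ epsPow b • A})

/-- The gauge `P_A(u) = e^{-val_A(u)}`. -/
def gaugeA (A : Set G) (u : G) : ℝ :=
  if valA A u = ⊤ then 0 else Real.exp (-(valA A u).toReal)

end Module

lemma IsO.add {u v : ℝ → ℂ} {b : ℝ} (hu : IsO u b) (hv : IsO v b) : IsO (u + v) b := by
  obtain ⟨C₁, hC₁, ε₁, hε₁, H₁⟩ := hu
  obtain ⟨C₂, hC₂, ε₂, hε₂, H₂⟩ := hv
  refine ⟨C₁ + C₂, by positivity, min ε₁ ε₂, lt_min hε₁ hε₂, fun ε hε hεle => ?_⟩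
  calc ‖u ε + v ε‖ ≤ ‖u ε‖ + ‖v ε‖ := norm_add_le _ _
    _ ≤ C₁ * ε ^ b + C₂ * ε ^ b :=
        add_le_add (H₁ ε hε (hεle.trans (min_le_left _ _)))
          (H₂ ε hε (hεle.trans (min_le_right _ _)))
    _ = (C₁ + C₂) * ε ^ b := by ring

lemma IsO.mul {u v : ℝ → ℂ} {b c : ℝ} (hu : IsO u b) (hv : IsO v c) : IsO (u * v) (b + c) := by
  obtain ⟨C₁, hC₁, ε₁, hε₁, H₁⟩ := hu
  obtain ⟨C₂, hC₂, ε₂, hε₂, H₂⟩ := hv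
  refine ⟨C₁ * C₂, by positivity, min ε₁ ε₂, lt_min hε₁ hε₂, fun ε hε hεle => ?_⟩
  calc ‖u ε * v ε‖ = ‖u ε‖ * ‖v ε‖ := norm_mul _ _
    _ ≤ (C₁ * ε ^ b) * (C₂ * ε ^ c) :=
        mul_le_mul (H₁ ε hε (hεle.trans (min_le_left _ _)))
          (H₂ ε hε (hεle.trans (min_le_right _ _))) (norm_nonneg _) (by positivity)
    _ = C₁ * C₂ * ε ^ (b + c) := by rw [Real.rpow_add hε]; ring

lemma Negligible.isO {u : ℝ → ℂ} (hu : Negligible u) (b : ℝ) : IsO u b :=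
  isO_mono (hu ⌈b⌉₊) (Nat.le_ceil b)

lemma isO_epsPow_net (b : ℝ) : IsO (fun ε => ((ε ^ b : ℝ) : ℂ)) b :=
  ⟨1, one_pos, 1, one_pos, fun ε hε _ => by
    rw [one_mul, Complex.norm_real, Real.norm_of_nonneg (Real.rpow_nonneg hε.le b)]⟩

/-- Hence `valC` can be computed on any representative, not only on `Quotient.out`. -/
lemma isO_out_mk {x : moderateSubring} {b : ℝ} (hx : IsO x.val b) :
    IsO (Quotient.out (Ideal.Quotient.mk negligibleIdeal x)).val b := by
  have hneg : Quotient.out (Ideal.Quotient.mk negligibleIdeal x) - x ∈ negligibleIdeal :=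
    Ideal.Quotient.eq.1 (Ideal.Quotient.mk_out _)
  simpa using (Negligible.isO hneg b).add hx

lemma normEC_le_one_of_isO_zero {x : Ctilde} (hx : IsO (Quotient.out x).val 0) :
    normEC x ≤ 1 := by
  have hval : 0 ≤ valC x := le_sSup ⟨0, hx, rfl⟩
  unfold normEC
  split_ifs
  · exact zero_le_one
  · exact Real.exp_le_one_iff.2 (neg_nonpos.2 (EReal.toReal_nonneg hval))

lemma epsPow_add (b c : ℝ) : epsPow (b + c) = epsPow b * epsPow c := by
  unfold epsPow
  rw [← map_mul, Ideal.Quotient.eq]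
  intro q
  refine ⟨1, one_pos, 1, one_pos, fun ε hε _ => ?_⟩
  simp [Real.rpow_add hε]
  positivity

lemma epsPow_zero : epsPow 0 = 1 := by
  rw [epsPow, ← map_one (Ideal.Quotient.mk negligibleIdeal)]
  congr
  ext ε
  simp

lemma EReal.sSup_image_coe_add_le {S T U : Set ℝ} (h : S + T ⊆ U) :
    sSup (Real.toEReal '' S) + sSup (Real.toEReal '' T) ≤ sSup (Real.toEReal '' U) := by
  refine EReal.add_le_of_forall_lt fun x hx y hy => ?_
  obtain ⟨_, ⟨s, hs, rfl⟩, hxs⟩ := lt_sSup_iff.1 hx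
  obtain ⟨_, ⟨t, ht, rfl⟩, hyt⟩ := lt_sSup_iff.1 hy
  calc x + y ≤ ((s + t : ℝ) : EReal) := EReal.coe_add s t ▸ add_le_add hxs.le hyt.le
    _ ≤ sSup (Real.toEReal '' U) := le_sSup ⟨s + t, h (Set.add_mem_add hs ht), rfl⟩

lemma EReal.min_sSup_image_coe_le {S T U : Set ℝ} (h : ∀ s ∈ S, ∀ t ∈ T, min s t ∈ U) :
    min (sSup (Real.toEReal '' S)) (sSup (Real.toEReal '' T)) ≤ sSup (Real.toEReal '' U) := by
  refine le_of_forall_lt fun x hx => ?_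
  obtain ⟨_, ⟨s, hs, rfl⟩, hxs⟩ := lt_sSup_iff.1 (lt_min_iff.1 hx).1
  obtain ⟨_, ⟨t, ht, rfl⟩, hyt⟩ := lt_sSup_iff.1 (lt_min_iff.1 hx).2
  calc x < ((min s t : ℝ) : EReal) := by
        rw [EReal.coe_strictMono.monotone.map_min]; exact lt_min hxs hyt
    _ ≤ sSup (Real.toEReal '' U) := le_sSup ⟨min s t, h s hs t ht, rfl⟩

section Module

variable {G : Type*} [AddCommGroup G] [Module Ctilde G] {A : Set G}

lemma zero_mem_of_cAbsorbent (habs : CAbsorbent A) : (0 : G) ∈ A := by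
  obtain ⟨a, ha⟩ := habs 0
  obtain ⟨x, hx, hx0⟩ := ha a le_rfl
  have : x = 0 := by
    simpa [← smul_assoc, ← epsPow_add, epsPow_zero] using congrArg (epsPow (-a) • ·) hx0
  exact this ▸ hx

lemma CConvex.mem_epsPow_smul_anti (hconv : CConvex A) {u : G} {b b' : ℝ}
    (hu : u ∈ epsPow b • A) (hb : b' ≤ b) : u ∈ epsPow b' • A := by
  obtain ⟨x, hx, rfl⟩ := hu
  refine ⟨epsPow (b - b') • x, hconv.2 _ (sub_nonneg.2 hb) (Set.smul_mem_smul_set hx), ?_⟩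
  simp only [smul_smul, ← epsPow_add, add_sub_cancel]

lemma CConvex.add_mem_epsPow_smul (hconv : CConvex A) {u v : G} {b c : ℝ}
    (hu : u ∈ epsPow b • A) (hv : v ∈ epsPow c • A) : u + v ∈ epsPow (min b c) • A := by
  have hsum := Set.add_mem_add (hconv.mem_epsPow_smul_anti hu (min_le_left b c))
    (hconv.mem_epsPow_smul_anti hv (min_le_right b c))
  rw [← smul_add] at hsum
  exact Set.smul_set_mono hconv.1 hsum

lemma CBalanced.epsPow_neg_mul_smul_subset (hbal : CBalanced A) {lam : Ctilde} {b : ℝ}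
    (h : IsO (Quotient.out lam).val b) : (epsPow (-b) * lam) • A ⊆ A := by
  refine hbal _ (normEC_le_one_of_isO_zero ?_)
  have hmk : epsPow (-b) * lam = Ideal.Quotient.mk negligibleIdeal
      (⟨fun ε => ((ε ^ (-b) : ℝ) : ℂ), epsPow_moderate (-b)⟩ * Quotient.out lam) := by
    rw [map_mul, Ideal.Quotient.mk_out]
    rfl
  rw [hmk]
  exact isO_out_mk (by simpa using (isO_epsPow_net (-b)).mul h)

lemma CBalanced.smul_mem_epsPow_smul (hbal : CBalanced A) {lam : Ctilde} {u : G} {b c : ℝ}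
    (hlam : IsO (Quotient.out lam).val b) (hu : u ∈ epsPow c • A) :
    lam • u ∈ epsPow (b + c) • A := by
  obtain ⟨x, hx, rfl⟩ := hu
  refine ⟨(epsPow (-b) * lam) • x, hbal.epsPow_neg_mul_smul_subset hlam ⟨x, hx, rfl⟩, ?_⟩
  have hinv : epsPow b * epsPow (-b) = 1 := by rw [← epsPow_add, add_neg_cancel, epsPow_zero]
  simp only [smul_smul, epsPow_add]
  congr 1
  linear_combination (epsPow c * lam) * hinv

end Module

/-- the Minkowski functional `val_A` of an absolutely `C̃`-convex
and `C̃`-absorbent subset `A` of a `C̃`-module `G` is a valuation on `G`. -/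
theorem valA_is_valuation {G : Type*} [AddCommGroup G] [Module Ctilde G]
    (A : Set G) (hbal : CBalanced A) (hconv : CConvex A) (habs : CAbsorbent A) :
    valA A (0 : G) = ⊤ ∧
    (∀ (lam : Ctilde) (u : G), valC lam + valA A u ≤ valA A (lam • u)) ∧
    (∀ u v : G, min (valA A u) (valA A v) ≤ valA A (u + v)) := by
  refine ⟨?_, fun lam u => ?_, fun u v => ?_⟩
  · have hfull : {b : ℝ | (0 : G) ∈ epsPow b • A} = Set.univ :=
      Set.eq_univ_of_forall fun b => ⟨0, zero_mem_of_cAbsorbent habs, smul_zero _⟩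
    rw [valA, hfull, Set.image_univ, EReal.range_coe_eq_Ioo, csSup_Ioo bot_lt_top]
  · exact EReal.sSup_image_coe_add_le fun _ ⟨b, hb, c, hc, hbc⟩ =>
      hbc ▸ hbal.smul_mem_epsPow_smul hb hc
  · exact EReal.min_sSup_image_coe_le fun _ hb _ hc => hconv.add_mem_epsPow_smul hb hc
end
end

section
/- Let a_ε(x,ξ) and b_ε(x,ξ) be nets of symbols such that a_ε satisfies the slow scale micro-ellipticity estimate |a_ε(x,ξ)| ≥ s_ε^{-1}⟨ξ⟩^m for (x,ξ) ∈ U×Γ, |ξ| ≥ r_ε, with (r_ε)_ε,(s_ε)_ε ∈ Π_sc, and b_ε satisfies a slow scale bound |b_ε(x,ξ)| ≤ c ω_ε ⟨ξ⟩^{m'} on U×Γ with m' < m and (ω_ε)_ε ∈ Π_sc. Then a_ε + b_ε is slow scale micro-elliptic at the same point: there exist (r'_ε)_ε, (s'_ε)_ε ∈ Π_sc with |a_ε(x,ξ)+b_ε(x,ξ)| ≥ (s'_ε)^{-1}⟨ξ⟩^m for (x,ξ) ∈ U×Γ, |ξ| ≥ r'_ε. -/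
/-!
Choose `s' = 2 s` and let `r'` be the larger of `r` and `(2 c ω s) ^ (m - m')⁻¹`. Beyond that radius
`⟨ξ⟩ ^ (m - m') ≥ ‖ξ‖ ^ (m - m') ≥ 2 c ω s`, so the lower order perturbation is at most half of the
elliptic lower bound `s⁻¹ ⟨ξ⟩ ^ m`, and the reverse triangle inequality leaves `(2 s)⁻¹ ⟨ξ⟩ ^ m`.
Both nets are slow scale because slow scale nets are closed under constants, products, maxima and
nonnegative powers.
-/

noncomputable section

/-- Strongly positive slow scale nets: `∃ c > 0` with `c ≤ ω ε` on `(0,1]`,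
and for every power `p ≥ 0`, `ω ε ^ p ≤ c_p ε⁻¹` on `(0,1]`. -/
def SlowScale (ω : ℝ → ℝ) : Prop :=
  ∃ c > 0, (∀ ε : ℝ, 0 < ε → ε ≤ 1 → c ≤ ω ε) ∧
    ∀ p : ℝ, 0 ≤ p → ∃ cp > 0, ∀ ε : ℝ, 0 < ε → ε ≤ 1 → ω ε ^ p ≤ cp * ε⁻¹

/-- `⟨ξ⟩ = (1 + |ξ|²)^{1/2}`. -/
def jbracket {n : ℕ} (ξ : EuclideanSpace ℝ (Fin n)) : ℝ := Real.sqrt (1 + ‖ξ‖ ^ 2)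

namespace SlowScale

variable {ω ω₁ ω₂ : ℝ → ℝ}

lemma pos (h : SlowScale ω) {ε : ℝ} (hε : 0 < ε) (hε1 : ε ≤ 1) : 0 < ω ε := by
  obtain ⟨c, hc, hlow, -⟩ := h
  exact hc.trans_le (hlow ε hε hε1)

lemma of_le (h : SlowScale ω₂) {c : ℝ} (hc : 0 < c)
    (hlow : ∀ ε : ℝ, 0 < ε → ε ≤ 1 → c ≤ ω₁ ε)
    (hle : ∀ ε : ℝ, 0 < ε → ε ≤ 1 → ω₁ ε ≤ ω₂ ε) : SlowScale ω₁ := by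
  obtain ⟨-, -, -, hup⟩ := h
  refine ⟨c, hc, hlow, fun p hp => ?_⟩
  obtain ⟨cp, hcp, hbound⟩ := hup p hp
  refine ⟨cp, hcp, fun ε hε hε1 => ?_⟩
  calc ω₁ ε ^ p ≤ ω₂ ε ^ p :=
        Real.rpow_le_rpow (hc.le.trans (hlow ε hε hε1)) (hle ε hε hε1) hp
    _ ≤ cp * ε⁻¹ := hbound ε hε hε1

lemma const {K : ℝ} (hK : 0 < K) : SlowScale (fun _ => K) := by
  refine ⟨K, hK, fun _ _ _ => le_rfl, fun p _ => ⟨K ^ p, by positivity, fun ε hε hε1 => ?_⟩⟩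
  exact le_mul_of_one_le_right (by positivity) (one_le_inv_iff₀.2 ⟨hε, hε1⟩)

lemma max (h₁ : SlowScale ω₁) (h₂ : SlowScale ω₂) :
    SlowScale (fun ε => max (ω₁ ε) (ω₂ ε)) := by
  obtain ⟨c, hc, hlow, hup₁⟩ := h₁
  obtain ⟨-, -, -, hup₂⟩ := h₂
  refine ⟨c, hc, fun ε hε hε1 => (hlow ε hε hε1).trans (le_max_left _ _), fun p hp => ?_⟩
  obtain ⟨d₁, hd₁, hb₁⟩ := hup₁ p hp
  obtain ⟨d₂, hd₂, hb₂⟩ := hup₂ p hp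
  refine ⟨d₁ + d₂, by positivity, fun ε hε hε1 => ?_⟩
  have hε' : 0 < ε⁻¹ := inv_pos.2 hε
  dsimp only
  rcases max_cases (ω₁ ε) (ω₂ ε) with ⟨hmax, -⟩ | ⟨hmax, -⟩ <;> rw [hmax]
  · nlinarith [hb₁ ε hε hε1]
  · nlinarith [hb₂ ε hε hε1]

lemma rpow (h : SlowScale ω) {α : ℝ} (hα : 0 ≤ α) : SlowScale (fun ε => ω ε ^ α) := by
  obtain ⟨c, hc, hlow, hup⟩ := h
  have hc' : 0 < min c 1 := lt_min hc one_pos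
  refine ⟨min c 1 ^ α, by positivity, fun ε hε hε1 =>
    Real.rpow_le_rpow hc'.le ((min_le_left c 1).trans (hlow ε hε hε1)) hα, fun p hp => ?_⟩
  obtain ⟨d, hd, hbound⟩ := hup (α * p) (mul_nonneg hα hp)
  refine ⟨d, hd, fun ε hε hε1 => ?_⟩
  rw [← Real.rpow_mul (hc.trans_le (hlow ε hε hε1)).le]
  exact hbound ε hε hε1

/-- The product is dominated by the square of the maximum. -/
lemma mul (h₁ : SlowScale ω₁) (h₂ : SlowScale ω₂) : SlowScale (fun ε => ω₁ ε * ω₂ ε) := by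
  have hsq := (h₁.max h₂).rpow zero_le_two
  obtain ⟨c₁, hc₁, hlow₁, -⟩ := id h₁
  obtain ⟨c₂, hc₂, hlow₂, -⟩ := id h₂
  refine hsq.of_le (mul_pos hc₁ hc₂)
    (fun ε hε hε1 => mul_le_mul (hlow₁ ε hε hε1) (hlow₂ ε hε hε1) hc₂.le
      (h₁.pos hε hε1).le) (fun ε hε hε1 => ?_)
  rw [Real.rpow_two, sq]
  exact mul_le_mul (le_max_left _ _) (le_max_right _ _) (h₂.pos hε hε1).le
    ((h₁.pos hε hε1).le.trans (le_max_left _ _))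

end SlowScale

lemma one_le_jbracket {n : ℕ} (ξ : EuclideanSpace ℝ (Fin n)) : 1 ≤ jbracket ξ :=
  Real.one_le_sqrt.2 (le_add_of_nonneg_right (sq_nonneg _))

lemma norm_le_jbracket {n : ℕ} (ξ : EuclideanSpace ℝ (Fin n)) : ‖ξ‖ ≤ jbracket ξ :=
  Real.le_sqrt_of_sq_le (le_add_of_nonneg_left zero_le_one)

lemma mul_rpow_le_rpow_of_rpow_inv_sub_le {B J m m' : ℝ} (hm : m' < m) (hB : 0 ≤ B)
    (hJ : 0 < J) (h : B ^ (m - m')⁻¹ ≤ J) : B * J ^ m' ≤ J ^ m := by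
  have hd : m - m' ≠ 0 := sub_ne_zero.2 hm.ne'
  have hBJ : B ≤ J ^ (m - m') := by
    calc B = (B ^ (m - m')⁻¹) ^ (m - m') := (Real.rpow_inv_rpow hB hd).symm
      _ ≤ J ^ (m - m') := Real.rpow_le_rpow (by positivity) h (sub_nonneg.2 hm.le)
  calc B * J ^ m' ≤ J ^ (m - m') * J ^ m' := by gcongr
    _ = J ^ m := by rw [← Real.rpow_add hJ, sub_add_cancel]

lemma half_le_norm_add {E : Type*} [SeminormedAddCommGroup E] {u v : E} {t : ℝ}
    (hu : t ≤ ‖u‖) (hv : ‖v‖ ≤ t / 2) : t / 2 ≤ ‖u + v‖ := by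
  linarith [norm_sub_le_norm_add u v]

/-- slow scale micro-ellipticity is stable under perturbations
by lower order terms with slow scale bounds. -/
theorem slowScale_microelliptic_stable {n : ℕ}
    (U : Set (EuclideanSpace ℝ (Fin n))) (Γ : Set (EuclideanSpace ℝ (Fin n)))
    (a b : ℝ → EuclideanSpace ℝ (Fin n) → EuclideanSpace ℝ (Fin n) → ℂ)
    (m m' : ℝ) (hm : m' < m)
    (r s ω : ℝ → ℝ) (hr : SlowScale r) (hs : SlowScale s) (hω : SlowScale ω)
    (hell : ∀ ε : ℝ, 0 < ε → ε ≤ 1 → ∀ x ∈ U, ∀ ξ ∈ Γ, r ε ≤ ‖ξ‖ →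
      (s ε)⁻¹ * jbracket ξ ^ m ≤ ‖a ε x ξ‖)
    (hb : ∃ c > 0, ∀ ε : ℝ, 0 < ε → ε ≤ 1 → ∀ x ∈ U, ∀ ξ ∈ Γ,
      ‖b ε x ξ‖ ≤ c * ω ε * jbracket ξ ^ m') :
    ∃ r' s' : ℝ → ℝ, SlowScale r' ∧ SlowScale s' ∧
      ∀ ε : ℝ, 0 < ε → ε ≤ 1 → ∀ x ∈ U, ∀ ξ ∈ Γ, r' ε ≤ ‖ξ‖ →
        (s' ε)⁻¹ * jbracket ξ ^ m ≤ ‖a ε x ξ + b ε x ξ‖ := by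
  obtain ⟨c, hc, hbound⟩ := hb
  have hB : SlowScale (fun ε => 2 * c * ω ε * s ε) :=
    ((SlowScale.const (by positivity)).mul hω).mul hs
  refine ⟨fun ε => max (r ε) ((2 * c * ω ε * s ε) ^ (m - m')⁻¹), fun ε => 2 * s ε,
    hr.max (hB.rpow (inv_nonneg.2 (sub_nonneg.2 hm.le))), (SlowScale.const two_pos).mul hs, ?_⟩
  intro ε hε hε1 x hx ξ hξ hξr
  have hsε := hs.pos hε hε1
  have hJ : 0 < jbracket ξ := zero_lt_one.trans_le (one_le_jbracket ξ)
  have habsorb : 2 * c * ω ε * s ε * jbracket ξ ^ m' ≤ jbracket ξ ^ m :=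
    mul_rpow_le_rpow_of_rpow_inv_sub_le hm (hB.pos hε hε1).le hJ
      (((le_max_right _ _).trans hξr).trans (norm_le_jbracket ξ))
  have hbsmall : ‖b ε x ξ‖ ≤ (s ε)⁻¹ * jbracket ξ ^ m / 2 := by
    rw [inv_mul_eq_div, div_div, le_div_iff₀ (by positivity)]
    nlinarith [hbound ε hε hε1 x hx ξ hξ]
  calc (2 * s ε)⁻¹ * jbracket ξ ^ m = (s ε)⁻¹ * jbracket ξ ^ m / 2 := by ring
    _ ≤ ‖a ε x ξ + b ε x ξ‖ :=
      half_le_norm_add (hell ε hε hε1 x hx ξ hξ ((le_max_left _ _).trans hξr)) hbsmall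
end
end

section
/- Consider the symbol net p_ε(x,ξ) = 1 + c_ε x², c_ε ≥ 0, on ℝ×ℝ, and the unique Colombeau solution u = [(1/(1+c_ε x²))_ε] of p·u = 1. Then u ∈ G^∞(ℝ) (i.e. there is N such that for all k, sup_{x∈K}|∂^k u_ε(x)| = O(ε^{-N}) for every compact K) if and only if (c_ε)_ε satisfies the slow scale condition: for every p ≥ 0, c_ε^p = O(ε^{-1}). -/
/-!
On the real line `(1 + c x²)⁻¹ = Re (1 + i √c x)⁻¹`, so the derivatives of `u_ε` are the real parts
of `(-1)ᵏ k! (i √c_ε)ᵏ (1 + i √c_ε x)⁻¹⁻ᵏ`. Since `|1 + i √c x| ≥ 1`, this gives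
`|∂ᵏ u_ε| ≤ k! c_ε^{k/2}` everywhere, with equality at `x = 0` for even `k`. Hence `u ∈ G^∞` says
exactly that all powers `c_εⁿ` are `O(ε^{-N})` for one `N`; and that is equivalent to the slow scale
condition, because `c_ε^{p(N+1)} ≤ max(1, c_ε^{⌈p(N+1)⌉}) = O(ε^{-(N+1)})`.
-/

open Complex Nat

theorem iteratedDeriv_re_comp_ofReal {g : ℂ → ℂ}
    (hg : ∀ (k : ℕ) (x : ℝ), DifferentiableAt ℂ (deriv^[k] g) x) (k : ℕ) (x : ℝ) :
    iteratedDeriv k (fun y : ℝ => (g y).re) x = (deriv^[k] g x).re := by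
  induction k generalizing x with
  | zero => rfl
  | succ k ih =>
    rw [iteratedDeriv_succ, funext ih, Function.iterate_succ_apply']
    exact (hg k x).hasDerivAt.real_of_complex.deriv

theorem inv_one_add_mul_sq_eq_re {c : ℝ} (hc : 0 ≤ c) (y : ℝ) :
    (1 + c * y ^ 2)⁻¹ = ((I * √c * y + 1)⁻¹).re := by
  have hs : √c * y * (√c * y) = c * y ^ 2 := by rw [mul_mul_mul_comm, Real.mul_self_sqrt hc, sq]
  simp [inv_re, normSq_apply, hs]

theorem one_le_norm_I_mul_add_one (t : ℝ) : 1 ≤ ‖I * t + 1‖ := by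
  simpa using abs_re_le_norm (I * t + 1)

theorem iteratedDeriv_inv_one_add_mul_sq {c : ℝ} (hc : 0 ≤ c) (k : ℕ) (x : ℝ) :
    iteratedDeriv k (fun y => (1 + c * y ^ 2)⁻¹) x
      = ((-1) ^ k * k ! * (I * √c) ^ k * (I * √c * x + 1) ^ (-1 - k : ℤ)).re := by
  simp_rw [inv_one_add_mul_sq_eq_re hc]
  rw [iteratedDeriv_re_comp_ofReal (g := fun z => (I * √c * z + 1)⁻¹), iter_deriv_inv_linear]
  intro j y
  rw [iter_deriv_inv_linear]
  have : I * √c * y + 1 ≠ 0 := by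
    rw [mul_assoc, ← ofReal_mul]
    exact norm_pos_iff.mp (one_pos.trans_le (one_le_norm_I_mul_add_one _))
  fun_prop (disch := exact Or.inl this)

theorem abs_iteratedDeriv_inv_one_add_mul_sq_le {c : ℝ} (hc : 0 ≤ c) (k : ℕ) (x : ℝ) :
    |iteratedDeriv k (fun y => (1 + c * y ^ 2)⁻¹) x| ≤ k ! * c ^ ((k : ℝ) / 2) := by
  rw [iteratedDeriv_inv_one_add_mul_sq hc]
  refine (abs_re_le_norm _).trans ?_
  have hc' : c ^ ((k : ℝ) / 2) = √c ^ k := by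
    rw [Real.sqrt_eq_rpow, ← Real.rpow_natCast, ← Real.rpow_mul hc]; ring_nf
  calc _ = k ! * √c ^ k * ‖I * (√c * x : ℝ) + 1‖ ^ (-1 - k : ℤ) := by
        simp [norm_zpow, abs_of_nonneg (Real.sqrt_nonneg c), mul_assoc]
    _ ≤ k ! * √c ^ k * 1 := by
        gcongr
        exact zpow_le_one_of_nonpos₀ (one_le_norm_I_mul_add_one _) (by omega)
    _ = _ := by rw [hc', mul_one]

theorem abs_iteratedDeriv_inv_one_add_mul_sq_zero {c : ℝ} (hc : 0 ≤ c) (n : ℕ) :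
    |iteratedDeriv (2 * n) (fun y => (1 + c * y ^ 2)⁻¹) 0| = (2 * n) ! * c ^ n := by
  rw [iteratedDeriv_inv_one_add_mul_sq hc]
  have : ((-1) ^ (2 * n) * (2 * n) ! * (I * √c) ^ (2 * n) : ℂ)
      = (((-1) ^ n * (2 * n) ! * c ^ n : ℝ) : ℂ) := by
    push_cast
    rw [pow_mul, pow_mul, mul_pow, I_sq, ← ofReal_pow, Real.sq_sqrt hc]
    ring
  rw [ofReal_zero, mul_zero, zero_add, one_zpow, mul_one, this, ofReal_re]
  simp [abs_mul, abs_of_nonneg hc]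

theorem rpow_le_max_one_pow {a q : ℝ} {n : ℕ} (ha : 0 ≤ a) (hq : 0 ≤ q) (hqn : q ≤ n) :
    a ^ q ≤ max 1 (a ^ n) := by
  rcases le_or_gt a 1 with ha1 | ha1
  · exact (Real.rpow_le_one ha ha1 hq).trans (le_max_left _ _)
  · rw [← Real.rpow_natCast]
    exact (Real.rpow_le_rpow_of_exponent_le ha1.le hqn).trans (le_max_right _ _)

theorem slowScale_of_forall_pow_le {c : ℝ → ℝ} (hc : ∀ ε, 0 ≤ c ε) (N : ℕ)
    (h : ∀ n : ℕ, ∃ C > 0, ∀ ε : ℝ, 0 < ε → ε ≤ 1 → c ε ^ n ≤ C * ε ^ (-(N : ℝ)))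
    (p : ℝ) (hp : 0 ≤ p) : ∃ cp > 0, ∀ ε : ℝ, 0 < ε → ε ≤ 1 → c ε ^ p ≤ cp * ε⁻¹ := by
  obtain ⟨C, -, hC⟩ := h ⌈p * (N + 1)⌉₊
  refine ⟨max 1 C, by positivity, fun ε hε hε1 => ?_⟩
  have ht : 1 ≤ ε⁻¹ := one_le_inv₀ hε |>.mpr hε1
  have hM : N + 1 ≠ 0 := succ_ne_zero N
  -- comparing `(N+1)`-th powers avoids taking roots of `C`
  rw [← pow_le_pow_iff_left₀ (Real.rpow_nonneg (hc ε) p) (by positivity) hM,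
    ← Real.rpow_mul_natCast (hc ε)]
  calc c ε ^ (p * ↑(N + 1)) ≤ max 1 (c ε ^ ⌈p * (N + 1)⌉₊) :=
        rpow_le_max_one_pow (hc ε) (by positivity) (by push_cast; exact le_ceil _)
    _ ≤ max 1 C * ε⁻¹ ^ (N + 1) := by
        have hCε := hC ε hε hε1
        rw [Real.rpow_neg hε.le, Real.rpow_natCast, ← inv_pow] at hCε
        refine max_le ?_ (hCε.trans ?_)
        · exact one_le_mul_of_one_le_of_one_le (le_max_left _ _) (one_le_pow₀ ht)
        · gcongr
          · exact le_max_right _ _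
          · omega
    _ ≤ (max 1 C * ε⁻¹) ^ (N + 1) := by
        rw [mul_pow]
        gcongr
        exact le_self_pow₀ (le_max_left _ _) hM

theorem gInfty_iff_slowScale_general (c : ℝ → ℝ) (hc : ∀ ε : ℝ, 0 ≤ c ε) :
    (∃ N : ℕ, ∀ k : ℕ, ∀ K : Set ℝ, IsCompact K → ∃ C > 0,
        ∀ ε : ℝ, 0 < ε → ε ≤ 1 → ∀ x ∈ K,
          |iteratedDeriv k (fun y => (1 + c ε * y ^ 2)⁻¹) x| ≤ C * ε ^ (-(N : ℝ))) ↔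
    (∀ p : ℝ, 0 ≤ p → ∃ cp > 0, ∀ ε : ℝ, 0 < ε → ε ≤ 1 → c ε ^ p ≤ cp * ε⁻¹) := by
  constructor
  · rintro ⟨N, hN⟩
    refine slowScale_of_forall_pow_le hc N fun n => ?_
    obtain ⟨C, hC, hCε⟩ := hN (2 * n) {0} isCompact_singleton
    refine ⟨C, hC, fun ε hε hε1 => le_trans ?_ (hCε ε hε hε1 0 rfl)⟩
    rw [abs_iteratedDeriv_inv_one_add_mul_sq_zero (hc ε)]
    exact le_mul_of_one_le_left (pow_nonneg (hc ε) n) (mod_cast factorial_pos _)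
  · intro hslow
    refine ⟨1, fun k K _ => ?_⟩
    obtain ⟨cp, hcp, hcpε⟩ := hslow (k / 2) (by positivity)
    refine ⟨k ! * cp, by positivity, fun ε hε hε1 x _ => ?_⟩
    rw [cast_one, Real.rpow_neg_one, mul_assoc]
    exact (abs_iteratedDeriv_inv_one_add_mul_sq_le (hc ε) k x).trans
      (by gcongr; exact hcpε ε hε hε1)

/-- for the symbol net `p_ε(x,ξ) = 1 + c_ε x²` (`c_ε ≥ 0`
moderate) the unique Colombeau solution `u_ε(x) = (1 + c_ε x²)⁻¹` of
`p u = 1` is `G^∞` — i.e. there is a uniform moderateness exponent `N`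
valid for all derivatives on every compact set — if and only if `(c_ε)_ε`
is a slow scale net: `c_ε^p = O(ε⁻¹)` for every `p ≥ 0`. -/
theorem gInfty_iff_slowScale (c : ℝ → ℝ) (hc : ∀ ε : ℝ, 0 ≤ c ε)
    (hmod : ∃ N : ℕ, ∃ C > 0, ∀ ε : ℝ, 0 < ε → ε ≤ 1 → c ε ≤ C * ε ^ (-(N : ℝ))) :
    (∃ N : ℕ, ∀ k : ℕ, ∀ K : Set ℝ, IsCompact K → ∃ C > 0,
        ∀ ε : ℝ, 0 < ε → ε ≤ 1 → ∀ x ∈ K,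
          |iteratedDeriv k (fun y => (1 + c ε * y ^ 2)⁻¹) x| ≤ C * ε ^ (-(N : ℝ))) ↔
    (∀ p : ℝ, 0 ≤ p → ∃ cp > 0, ∀ ε : ℝ, 0 < ε → ε ≤ 1 → c ε ^ p ≤ cp * ε⁻¹) :=
  gInfty_iff_slowScale_general c hc
end
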